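/- Let P and Q be polynomials in two variables over ℂ such that Q(z, conj z) ≠ 0 for every z with |z| = 1. Then there exist one-variable polynomials p₁, q₁, p₂, q₂ over ℂ such that every root of q₁ and of q₂ lies in the open unit disc {z : |z| < 1}, the degree of pᵢ is at most the degree of qᵢ for i = 1, 2 (so the rational functions p₁/q₁ and p₂/q₂ have no pole at infinity and all their poles lie inside the open unit disc), and P(z, conj z)/Q(z, conj z) = p₁(z)/q₁(z) + conj(p₂(z)/q₂(z)) for all z with |z| = 1. (This is the 'poles inside' decomposition.) -/

import Mathlib

/-!
On the unit circle `z̄ = z⁻¹`, so `P(z, z̄) / Q(z, z̄)` is a one-variable rational function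
`N / D` whose denominator has no zero on the circle. Split `D = D_in * D_out` according to
whether its roots lie inside or outside the circle; the two factors are coprime, so partial
fractions give `N / D = u / D_in + V / D_out` with `deg u < deg D_in`. The second term is the
conjugate of a rational function with poles inside the disc: conjugating the coefficients of
`V` and `D_out` and reversing them with respect to a common degree bound `M` turns
`V(z) / D_out(z)` into `conj (V*(z) / D_out*(z))` on the circle, and sends the roots `w` of
`D_out` to `1 / w̄`.
-/

open ComplexConjugate Polynomial

theorem MvPolynomial.exists_eval_inv_eq_div_pow {K : Type*} [Field K]
    (P : MvPolynomial (Fin 2) K) :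
    ∃ (A : K[X]) (k : ℕ), ∀ z : K, z ≠ 0 → eval ![z, z⁻¹] P = A.eval z / z ^ k := by
  induction P using MvPolynomial.induction_on with
  | C a => exact ⟨Polynomial.C a, 0, fun z _ => by simp⟩
  | add p q hp hq =>
    obtain ⟨A, j, hA⟩ := hp
    obtain ⟨B, l, hB⟩ := hq
    refine ⟨A * Polynomial.X ^ l + B * Polynomial.X ^ j, j + l, fun z hz => ?_⟩
    simp only [map_add, hA z hz, hB z hz, Polynomial.eval_add, Polynomial.eval_mul,
      Polynomial.eval_pow, Polynomial.eval_X]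
    field_simp
    ring
  | mul_X p i hp =>
    obtain ⟨A, k, hA⟩ := hp
    fin_cases i
    · exact ⟨A * Polynomial.X, k, fun z hz => by simp [hA z hz]; ring⟩
    · exact ⟨A, k + 1, fun z hz => by simp [hA z hz]; field_simp; ring⟩

theorem Polynomial.exists_eq_mul_separating_roots {K : Type*} [Field K] [IsAlgClosed K]
    {f : K[X]} (hf : f ≠ 0) (p : K → Prop) :
    ∃ g h : K[X], f = g * h ∧ IsCoprime g h ∧
      (∀ z, g.IsRoot z → p z) ∧ (∀ z, h.IsRoot z → ¬ p z) := by
  classical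
  set g := ((f.roots.filter p).map (X - C ·)).prod
  set h := C f.leadingCoeff * ((f.roots.filter (¬ p ·)).map (X - C ·)).prod
  have hg : ∀ z, g.IsRoot z → p z := fun z hz => by
    simp [g, eval_multiset_prod, Multiset.prod_eq_zero_iff, sub_eq_zero] at hz
    exact hz.2
  have hh : ∀ z, h.IsRoot z → ¬ p z := fun z hz => by
    simp [h, eval_multiset_prod, Multiset.prod_eq_zero_iff, sub_eq_zero, hf] at hz
    exact hz.2
  refine ⟨g, h, ?_, ?_, hg, hh⟩
  · rw [(IsAlgClosed.splits f).eq_prod_roots, mul_left_comm, ← Multiset.prod_add,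
      ← Multiset.map_add, Multiset.filter_add_not]
  · refine (isCoprime_iff_aeval_ne_zero_of_isAlgClosed K K g h).2 fun z => ?_
    simp only [coe_aeval_eq_eval]
    by_contra! H
    exact hh z H.2 (hg z H.1)

theorem Polynomial.exists_eq_mul_add_mul_degree_lt {K : Type*} [Field K] (f : K[X])
    {g₁ g₂ : K[X]} (hcop : IsCoprime g₁ g₂) (hg₁ : g₁ ≠ 0) :
    ∃ u v : K[X], f = u * g₂ + v * g₁ ∧ u.degree < g₁.degree := by
  obtain ⟨α, β, hαβ⟩ := hcop
  refine ⟨f * β % g₁, f * β / g₁ * g₂ + f * α, ?_, degree_mod_lt _ hg₁⟩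
  linear_combination (-f) * hαβ - g₂ * EuclideanDomain.div_add_mod (f * β) g₁

/-- `conjReflect N f` is the polynomial `z ↦ z ^ N * conj (f (1 / z̄))`. -/
noncomputable def conjReflect (N : ℕ) (f : ℂ[X]) : ℂ[X] := (f.map (starRingEnd ℂ)).reflect N

section conjReflect

variable {N : ℕ} {f : ℂ[X]}

theorem eval_conjReflect (hf : f.natDegree ≤ N) {z : ℂ} (hz : z ≠ 0) :
    (conjReflect N f).eval z = z ^ N * conj (f.eval (conj z)⁻¹) := by
  let := invertibleOfNonzero (inv_ne_zero hz)
  have h := eval₂_reflect_mul_pow (RingHom.id ℂ) z⁻¹ N (f.map (starRingEnd ℂ))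
    (by rwa [natDegree_map])
  rw [invOf_eq_inv, inv_inv, ← eval, ← eval, eval_map, ← Complex.conj_conj z⁻¹, eval₂_at_apply,
    Complex.conj_conj, map_inv₀] at h
  rw [conjReflect, ← h, inv_pow, mul_left_comm, mul_inv_cancel₀ (pow_ne_zero _ hz), mul_one]

theorem conj_eval_conjReflect (hf : f.natDegree ≤ N) {z : ℂ} (hz : ‖z‖ = 1) :
    conj ((conjReflect N f).eval z) = conj z ^ N * f.eval z := by
  rw [eval_conjReflect hf (ne_zero_of_norm_ne_zero (hz.trans_ne one_ne_zero)),
    ← Complex.inv_eq_conj hz, inv_inv, map_mul, map_pow, Complex.conj_conj,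
    Complex.inv_eq_conj hz]

theorem norm_lt_one_of_isRoot_conjReflect (hf : f.natDegree ≤ N)
    (hroots : ∀ w, f.IsRoot w → 1 < ‖w‖) {z : ℂ} (hz : (conjReflect N f).IsRoot z) :
    ‖z‖ < 1 := by
  rcases eq_or_ne z 0 with rfl | hz0
  · simp
  rw [IsRoot, eval_conjReflect hf hz0, mul_eq_zero, _root_.map_eq_zero] at hz
  have := hroots _ (hz.resolve_left (pow_ne_zero _ hz0))
  rwa [norm_inv, Complex.norm_conj, one_lt_inv₀ (norm_pos_iff.mpr hz0)] at this

theorem degree_conjReflect_le (hf : f.natDegree ≤ N) : (conjReflect N f).degree ≤ N :=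
  degree_le_of_natDegree_le <| natDegree_reflect_le.trans <| by
    rw [natDegree_map]
    exact max_le le_rfl hf

theorem coeff_conjReflect_self : (conjReflect N f).coeff N = conj (f.coeff 0) := by
  rw [conjReflect, coeff_reflect, revAt_le le_rfl, Nat.sub_self, coeff_map]

end conjReflect

theorem exists_eval_conj_div_eq_on_circle (P Q : MvPolynomial (Fin 2) ℂ)
    (hQ : ∀ z : ℂ, ‖z‖ = 1 → MvPolynomial.eval ![z, conj z] Q ≠ 0) :
    ∃ N D : ℂ[X], ∀ z : ℂ, ‖z‖ = 1 → D.eval z ≠ 0 ∧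
      MvPolynomial.eval ![z, conj z] P / MvPolynomial.eval ![z, conj z] Q
        = N.eval z / D.eval z := by
  obtain ⟨A, j, hA⟩ := P.exists_eval_inv_eq_div_pow
  obtain ⟨B, l, hB⟩ := Q.exists_eval_inv_eq_div_pow
  refine ⟨A * X ^ l, B * X ^ j, fun z hz => ?_⟩
  have hz0 : z ≠ 0 := ne_zero_of_norm_ne_zero (hz.trans_ne one_ne_zero)
  have hQz := hQ z hz
  rw [← Complex.inv_eq_conj hz, hB z hz0] at hQz ⊢
  have hBz : B.eval z ≠ 0 := left_ne_zero_of_mul hQz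
  rw [hA z hz0]
  simp only [eval_mul, eval_pow, eval_X]
  exact ⟨mul_ne_zero hBz (pow_ne_zero _ hz0), by field_simp⟩

/-- The "poles inside" decomposition: the restriction to the unit circle of a rational
function of `z` and `z̄` with nonvanishing denominator on the circle can be written as
`r₁(z) + conj (r₂(z))`, where `r₁` and `r₂` are rational functions of one variable all
of whose poles lie in the open unit disc and which have no pole at infinity. -/
theorem poles_inside_decomposition_on_circle
    (P Q : MvPolynomial (Fin 2) ℂ)
    (hQ : ∀ z : ℂ, ‖z‖ = 1 → MvPolynomial.eval ![z, conj z] Q ≠ 0) :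
    ∃ p₁ q₁ p₂ q₂ : Polynomial ℂ,
      (∀ z : ℂ, q₁.eval z = 0 → ‖z‖ < 1) ∧
      (∀ z : ℂ, q₂.eval z = 0 → ‖z‖ < 1) ∧
      p₁.degree ≤ q₁.degree ∧ p₂.degree ≤ q₂.degree ∧
      ∀ z : ℂ, ‖z‖ = 1 →
        MvPolynomial.eval ![z, conj z] P / MvPolynomial.eval ![z, conj z] Q
          = p₁.eval z / q₁.eval z + conj (p₂.eval z / q₂.eval z) := by
  obtain ⟨N, D, hND⟩ := exists_eval_conj_div_eq_on_circle P Q hQ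
  have hD0 : D ≠ 0 := fun h => (hND 1 (by simp)).1 (by simp [h])
  obtain ⟨Din, Dout, rfl, hcop, hin, hout⟩ := exists_eq_mul_separating_roots hD0 (‖·‖ < 1)
  have hout' : ∀ w, Dout.IsRoot w → 1 < ‖w‖ := fun w hw =>
    (not_lt.mp (hout w hw)).lt_of_ne fun h =>
      (hND w h.symm).1 (by rw [eval_mul, hw.eq_zero, mul_zero])
  obtain ⟨u, V, hNuV, hu⟩ := exists_eq_mul_add_mul_degree_lt N hcop (left_ne_zero_of_mul hD0)
  set M := max V.natDegree Dout.natDegree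
  have hVM : V.natDegree ≤ M := le_max_left _ _
  have hDoutM : Dout.natDegree ≤ M := le_max_right _ _
  refine ⟨u, Din, conjReflect M V, conjReflect M Dout, hin,
    fun z => norm_lt_one_of_isRoot_conjReflect hDoutM hout', hu.le, ?_, fun z hz => ?_⟩
  · refine (degree_conjReflect_le hVM).trans (le_degree_of_ne_zero ?_)
    rw [coeff_conjReflect_self, _root_.map_ne_zero, coeff_zero_eq_eval_zero]
    exact fun h => (hout' 0 h).not_gt (by simp)
  · have hz0 : z ≠ 0 := ne_zero_of_norm_ne_zero (hz.trans_ne one_ne_zero)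
    obtain ⟨hD, hPQ⟩ := hND z hz
    rw [eval_mul] at hD
    rw [hPQ, map_div₀, conj_eval_conjReflect hVM hz, conj_eval_conjReflect hDoutM hz,
      mul_div_mul_left _ _ (pow_ne_zero _ ((_root_.map_ne_zero _).mpr hz0)), hNuV]
    simp only [eval_add, eval_mul]
    field_simp [left_ne_zero_of_mul hD, right_ne_zero_of_mul hD]
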